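/- Let f : ℝ^{n+1} → ℂ be integrable and define for ω ∈ S^{n-1} the ray transform F(t,x;ω) = ∫_ℝ f(t+s, x+sω) ds. Then the Fourier transform of x ↦ F(t,x;ω) at ξ ∈ ℝ^n equals e^{−i(ω·ξ)t} · f̂(−ω·ξ, ξ), where f̂ denotes the Fourier transform of f in all n+1 variables. In particular, e^{it(ω·ξ)}·(F_{x→ξ}F(t,·;ω))(ξ) is independent of t. -/

import Mathlib

/-!
The shear `(s, x) ↦ (t + s, x + s • ω)` preserves Lebesgue measure on `ℝ × ℝⁿ`, so by Fubini
the `x`-Fourier transform of the ray transform is the integral of the sheared integrand over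
`ℝ × ℝⁿ`. At the sheared point the phase `⟪x, ξ⟫` equals
`(t + s) (-⟪ω, ξ⟫) + ⟪x + s • ω, ξ⟫ + t ⟪ω, ξ⟫`, which is the phase of `f̂(-⟪ω, ξ⟫, ξ)` up to
the constant `t ⟪ω, ξ⟫`.
-/

open MeasureTheory

section Shear

variable {E : Type*} [NormedAddCommGroup E] [NormedSpace ℝ E]

def shearHomeomorph (t : ℝ) (ω : E) : ℝ × E ≃ₜ ℝ × E where
  toFun p := (t + p.1, p.2 + p.1 • ω)
  invFun q := (q.1 - t, q.2 - (q.1 - t) • ω)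
  left_inv p := by simp
  right_inv q := by simp
  continuous_toFun := by fun_prop
  continuous_invFun := by fun_prop

@[simp]
theorem shearHomeomorph_apply (t : ℝ) (ω : E) (p : ℝ × E) :
    shearHomeomorph t ω p = (t + p.1, p.2 + p.1 • ω) :=
  rfl

variable [SecondCountableTopology E] [MeasurableSpace E] [BorelSpace E]
  (μ : Measure E) [μ.IsAddRightInvariant] [SFinite μ]

theorem measurePreserving_shearHomeomorph (t : ℝ) (ω : E) :
    MeasurePreserving (shearHomeomorph t ω)
      ((volume : Measure ℝ).prod μ) ((volume : Measure ℝ).prod μ) :=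
  (measurePreserving_add_left volume t).skew_product (by fun_prop)
    (.of_forall fun s => map_add_right_eq_self μ (s • ω))

theorem integral_integral_shear {F : Type*} [NormedAddCommGroup F] [NormedSpace ℝ F]
    (t : ℝ) (ω : E) {g : ℝ × E → F} (hg : Integrable g ((volume : Measure ℝ).prod μ)) :
    ∫ x, (∫ s, g (t + s, x + s • ω)) ∂μ = ∫ p, g p ∂(volume : Measure ℝ).prod μ := by
  have hΦ := measurePreserving_shearHomeomorph μ t ω
  have hemb := (shearHomeomorph t ω).measurableEmbedding
  calc ∫ x, (∫ s, g (t + s, x + s • ω)) ∂μ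
      = ∫ p, g (shearHomeomorph t ω p) ∂(volume : Measure ℝ).prod μ :=
        (integral_prod_symm _ ((hΦ.integrable_comp_emb hemb).2 hg)).symm
    _ = ∫ p, g p ∂(volume : Measure ℝ).prod μ := hΦ.integral_comp hemb g

end Shear

theorem exp_inner_shear {E : Type*} [NormedAddCommGroup E] [InnerProductSpace ℝ E]
    (ω ξ x : E) (t s : ℝ) :
    Complex.exp (-Complex.I * (inner ℝ ω ξ : ℝ) * t) *
        Complex.exp (-Complex.I * (((t + s) * -(inner ℝ ω ξ : ℝ) + inner ℝ (x + s • ω) ξ : ℝ) : ℂ)) =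
      Complex.exp (-Complex.I * (inner ℝ x ξ : ℝ)) := by
  rw [← Complex.exp_add, inner_add_left, real_inner_smul_left]
  congr 1
  push_cast
  ring

theorem MeasureTheory.Integrable.exp_neg_I_mul {α : Type*} [MeasurableSpace α] {μ : Measure α}
    {f : α → ℂ} (hf : Integrable f μ) {φ : α → ℝ} (hφ : Measurable φ) :
    Integrable (fun a => Complex.exp (-Complex.I * φ a) * f a) μ :=
  hf.bdd_mul (c := 1) (by fun_prop : Measurable _).aestronglyMeasurable
    (.of_forall fun a => by simp [Complex.norm_exp])

theorem stmt_2_general (n : ℕ) (f : ℝ × EuclideanSpace ℝ (Fin n) → ℂ)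
    (hf : Integrable f)
    (ω : EuclideanSpace ℝ (Fin n))
    (t : ℝ) (ξ : EuclideanSpace ℝ (Fin n)) :
    (∫ x : EuclideanSpace ℝ (Fin n),
        Complex.exp (-Complex.I * (inner ℝ x ξ : ℝ)) * ∫ s : ℝ, f (t + s, x + s • ω)) =
      Complex.exp (-Complex.I * ((inner ℝ ω ξ : ℝ) : ℂ) * (t : ℂ)) *
        ∫ p : ℝ × EuclideanSpace ℝ (Fin n),
          Complex.exp (-Complex.I * ((p.1 * (-(inner ℝ ω ξ : ℝ)) + (inner ℝ p.2 ξ : ℝ) : ℝ) : ℂ)) *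
            f p := by
  set c := Complex.exp (-Complex.I * ((inner ℝ ω ξ : ℝ) : ℂ) * (t : ℂ))
  set g := fun p : ℝ × EuclideanSpace ℝ (Fin n) =>
    Complex.exp (-Complex.I * ((p.1 * (-(inner ℝ ω ξ : ℝ)) + (inner ℝ p.2 ξ : ℝ) : ℝ) : ℂ)) * f p
  have hg : Integrable g := hf.exp_neg_I_mul (by fun_prop)
  have hphase : ∀ x : EuclideanSpace ℝ (Fin n),
      Complex.exp (-Complex.I * (inner ℝ x ξ : ℝ)) * ∫ s : ℝ, f (t + s, x + s • ω) =
        ∫ s : ℝ, c * g (t + s, x + s • ω) := fun x => by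
    simp only [g, c, ← mul_assoc, exp_inner_shear, integral_const_mul]
  rw [integral_congr_ae (.of_forall hphase), ← integral_const_mul]
  exact integral_integral_shear volume t ω (hg.const_mul c)

theorem stmt_2 (n : ℕ) (f : ℝ × EuclideanSpace ℝ (Fin n) → ℂ)
    (hf : Integrable f)
    (ω : EuclideanSpace ℝ (Fin n)) (hω : ‖ω‖ = 1)
    (t : ℝ) (ξ : EuclideanSpace ℝ (Fin n)) :
    (∫ x : EuclideanSpace ℝ (Fin n),
        Complex.exp (-Complex.I * (inner ℝ x ξ : ℝ)) * ∫ s : ℝ, f (t + s, x + s • ω)) =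
      Complex.exp (-Complex.I * ((inner ℝ ω ξ : ℝ) : ℂ) * (t : ℂ)) *
        ∫ p : ℝ × EuclideanSpace ℝ (Fin n),
          Complex.exp (-Complex.I * ((p.1 * (-(inner ℝ ω ξ : ℝ)) + (inner ℝ p.2 ξ : ℝ) : ℝ) : ℂ)) *
            f p :=
  stmt_2_general n f hf ω t ξ
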